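/- Let l > 0, D > 0, ρ₀ > 0, and define S(t) = (64 ρ₀ l²/π⁴)·( ∑_{n=0}^∞ (1/(2n+1)²)·exp(−π²(2n+1)²Dt/l²) )² for t ≥ 0. Then S is integrable on (0, ∞) and ∫₀^∞ S(t) dt = (64 ρ₀ l⁴/(D π⁶))·∑_{n=0}^∞ ∑_{m=0}^∞ 1/( (2n+1)²·(2m+1)²·((2n+1)² + (2m+1)²) ). -/

import Mathlib

open Real MeasureTheory

/-- The survival probability
`S(t) = (64 ρ₀ l²/π⁴)(∑_{n=0}^∞ (2n+1)⁻² exp(−π²(2n+1)²Dt/l²))²`. -/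
noncomputable def survProb (l D ρ₀ t : ℝ) : ℝ :=
  64 * ρ₀ * l ^ 2 / π ^ 4 *
    (∑' n : ℕ, 1 / (2 * (n : ℝ) + 1) ^ 2 *
      Real.exp (-π ^ 2 * (2 * (n : ℝ) + 1) ^ 2 * D * t / l ^ 2)) ^ 2

/-!
Squaring the series turns `S` into the double exponential series
`∑_{n,m} K aₙ aₘ exp (-(λₙ + λₘ) t)` with `aₙ = (2n+1)⁻²`, `λₙ = π² D (2n+1)² / l²` and
`K = 64 ρ₀ l² / π⁴`. Its coefficients are absolutely summable and its rates are bounded below by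
`λ₀ > 0`, so the sum is continuous on `[0, ∞)` and dominated by a multiple of `exp (-λ₀ t)`, and it
may be integrated termwise: `∫₀^∞ exp (-λ t) dt = 1 / λ` gives `∑_{n,m} K aₙ aₘ / (λₙ + λₘ)`.
-/

open Set

theorem integral_exp_neg_mul_Ioi_zero {r : ℝ} (hr : 0 < r) :
    ∫ t in Ioi (0 : ℝ), exp (-r * t) = 1 / r := by
  rw [integral_exp_mul_Ioi (neg_neg_of_pos hr), mul_zero, exp_zero, neg_div_neg_eq]

theorem norm_mul_exp_neg_mul_le {b r s t : ℝ} (hsr : s ≤ r) (ht : 0 ≤ t) :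
    ‖b * exp (-r * t)‖ ≤ ‖b‖ * exp (-s * t) := by
  rw [norm_mul, norm_of_nonneg (exp_nonneg _)]
  gcongr

section ExponentialSeries

variable {ι : Type*} {b r : ι → ℝ}

theorem summable_mul_exp_neg_mul (hb : Summable b) (hr : ∀ i, 0 ≤ r i) {t : ℝ} (ht : 0 ≤ t) :
    Summable fun i => b i * exp (-r i * t) :=
  hb.norm.of_norm_bounded fun i => by
    simpa using norm_mul_exp_neg_mul_le (b := b i) (hr i) ht

theorem sq_tsum_mul_exp_neg_mul {t : ℝ} (h : Summable fun i => b i * exp (-r i * t)) :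
    (∑' i, b i * exp (-r i * t)) ^ 2 =
      ∑' p : ι × ι, b p.1 * b p.2 * exp (-(r p.1 + r p.2) * t) := by
  rw [sq, tsum_mul_tsum_of_summable_norm h.norm h.norm]
  refine tsum_congr fun p => ?_
  rw [neg_add, add_mul, exp_add]
  ring

theorem integrableOn_tsum_mul_exp_neg_mul {r₀ : ℝ} (hr₀ : 0 < r₀) (hr : ∀ i, r₀ ≤ r i)
    (hb : Summable b) : IntegrableOn (fun t => ∑' i, b i * exp (-r i * t)) (Ioi 0) := by
  have hcont : ContinuousOn (fun t => ∑' i, b i * exp (-r i * t)) (Ici 0) :=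
    continuousOn_tsum (fun i => by fun_prop) hb.norm fun i t (ht : 0 ≤ t) => by
      simpa using norm_mul_exp_neg_mul_le (b := b i) (hr₀.le.trans (hr i)) ht
  refine Integrable.mono' ((exp_neg_integrableOn_Ioi 0 hr₀).const_mul (∑' i, ‖b i‖))
    ((hcont.mono Ioi_subset_Ici_self).aestronglyMeasurable measurableSet_Ioi) ?_
  filter_upwards [ae_restrict_mem measurableSet_Ioi] with t (ht : 0 < t)
  exact tsum_of_norm_bounded (hb.norm.hasSum.mul_right _) fun i =>
    norm_mul_exp_neg_mul_le (hr i) ht.le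

theorem hasSum_integral_tsum_mul_exp_neg_mul [Countable ι] (hr : ∀ i, 0 < r i)
    (hb : Summable fun i => b i / r i) :
    HasSum (fun i => b i / r i) (∫ t in Ioi 0, ∑' i, b i * exp (-r i * t)) := by
  have hterm : ∀ i, ∫ t in Ioi 0, b i * exp (-r i * t) = b i / r i := fun i => by
    rw [integral_const_mul, integral_exp_neg_mul_Ioi_zero (hr i), mul_one_div]
  have hnorm : ∀ i, ∫ t in Ioi 0, ‖b i * exp (-r i * t)‖ = ‖b i / r i‖ := fun i => by
    simp_rw [norm_mul, norm_of_nonneg (exp_nonneg _)]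
    rw [integral_const_mul, integral_exp_neg_mul_Ioi_zero (hr i), norm_div,
      norm_of_nonneg (hr i).le, mul_one_div]
  simpa only [hterm] using hasSum_integral_of_summable_integral_norm
    (fun i => (exp_neg_integrableOn_Ioi 0 (hr i)).const_mul (b i))
    (hb.norm.congr fun i => (hnorm i).symm)

end ExponentialSeries

theorem summable_one_div_two_mul_add_one_sq :
    Summable fun n : ℕ => 1 / (2 * (n : ℝ) + 1) ^ 2 := by
  have := (Real.summable_one_div_nat_pow.2 one_lt_two).comp_injective
    (i := fun n : ℕ => 2 * n + 1) fun m n h => by simpa using h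
  simpa [Function.comp_def] using this

theorem summable_one_div_odd_sq_mul_odd_sq_mul_add :
    Summable fun p : ℕ × ℕ => 1 / ((2 * (p.1 : ℝ) + 1) ^ 2 * (2 * (p.2 : ℝ) + 1) ^ 2 *
      ((2 * (p.1 : ℝ) + 1) ^ 2 + (2 * (p.2 : ℝ) + 1) ^ 2)) := by
  refine .of_nonneg_of_le (fun p => by positivity) (fun p => ?_)
    (summable_one_div_two_mul_add_one_sq.mul_of_nonneg summable_one_div_two_mul_add_one_sq
      (fun n => by positivity) (fun n => by positivity))
  rw [one_div_mul_one_div]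
  gcongr
  · refine le_mul_of_one_le_right (by positivity) ?_
    nlinarith [Nat.cast_nonneg (α := ℝ) p.1, Nat.cast_nonneg (α := ℝ) p.2]
  · exact le_add_of_nonneg_left (by positivity)

noncomputable def decayRate (l D : ℝ) (n : ℕ) : ℝ := π ^ 2 * D / l ^ 2 * (2 * n + 1) ^ 2

theorem le_decayRate {l D : ℝ} (hD : 0 ≤ D) (n : ℕ) : π ^ 2 * D / l ^ 2 ≤ decayRate l D n := by
  refine le_mul_of_one_le_right (by positivity) ?_
  nlinarith [Nat.cast_nonneg (α := ℝ) n]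

theorem survProb_eq_tsum_prod {l D ρ₀ t : ℝ} (hD : 0 ≤ D) (ht : 0 ≤ t) :
    survProb l D ρ₀ t = ∑' p : ℕ × ℕ,
      64 * ρ₀ * l ^ 2 / π ^ 4 * (1 / (2 * (p.1 : ℝ) + 1) ^ 2 * (1 / (2 * (p.2 : ℝ) + 1) ^ 2)) *
        exp (-(decayRate l D p.1 + decayRate l D p.2) * t) := by
  have hsq : survProb l D ρ₀ t = 64 * ρ₀ * l ^ 2 / π ^ 4 *
      (∑' n : ℕ, 1 / (2 * (n : ℝ) + 1) ^ 2 * exp (-decayRate l D n * t)) ^ 2 := by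
    rw [survProb]
    congr 3 with n
    rw [decayRate]
    ring_nf
  rw [hsq, sq_tsum_mul_exp_neg_mul (summable_mul_exp_neg_mul summable_one_div_two_mul_add_one_sq
    (fun n => (by positivity : (0 : ℝ) ≤ π ^ 2 * D / l ^ 2).trans (le_decayRate hD n)) ht),
    ← tsum_mul_left]
  exact tsum_congr fun p => by ring

theorem coeff_div_decayRate_add {l D : ℝ} (hl : l ≠ 0) (hD : D ≠ 0) (ρ₀ : ℝ) (n m : ℕ) :
    64 * ρ₀ * l ^ 2 / π ^ 4 * (1 / (2 * (n : ℝ) + 1) ^ 2 * (1 / (2 * (m : ℝ) + 1) ^ 2)) /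
        (decayRate l D n + decayRate l D m) =
      64 * ρ₀ * l ^ 4 / (D * π ^ 6) * (1 / ((2 * (n : ℝ) + 1) ^ 2 * (2 * (m : ℝ) + 1) ^ 2 *
        ((2 * (n : ℝ) + 1) ^ 2 + (2 * (m : ℝ) + 1) ^ 2))) := by
  simp only [decayRate]
  field_simp

theorem mean_reaction_time_eq_double_series_general (l D ρ₀ : ℝ) (hl : 0 < l) (hD : 0 < D) :
    IntegrableOn (survProb l D ρ₀) (Set.Ioi 0) ∧
    (∫ t in Set.Ioi (0 : ℝ), survProb l D ρ₀ t)
      = 64 * ρ₀ * l ^ 4 / (D * π ^ 6) *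
        ∑' n : ℕ, ∑' m : ℕ,
          1 / ((2 * (n : ℝ) + 1) ^ 2 * (2 * (m : ℝ) + 1) ^ 2 *
            ((2 * (n : ℝ) + 1) ^ 2 + (2 * (m : ℝ) + 1) ^ 2)) := by
  have hc : 0 < π ^ 2 * D / l ^ 2 := by positivity
  have hrate : ∀ p : ℕ × ℕ, π ^ 2 * D / l ^ 2 ≤ decayRate l D p.1 + decayRate l D p.2 :=
    fun p => le_add_of_le_of_nonneg (le_decayRate hD.le p.1) (hc.le.trans (le_decayRate hD.le p.2))
  have ha := summable_one_div_two_mul_add_one_sq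
  have hb : Summable fun p : ℕ × ℕ =>
      64 * ρ₀ * l ^ 2 / π ^ 4 * (1 / (2 * (p.1 : ℝ) + 1) ^ 2 * (1 / (2 * (p.2 : ℝ) + 1) ^ 2)) :=
    (ha.mul_of_nonneg ha (fun n => by positivity) (fun n => by positivity)).mul_left _
  have hg := summable_one_div_odd_sq_mul_odd_sq_mul_add
  have hsum := hasSum_integral_tsum_mul_exp_neg_mul (fun p => hc.trans_le (hrate p))
    ((hg.mul_left _).congr fun p => (coeff_div_decayRate_add hl.ne' hD.ne' ρ₀ p.1 p.2).symm)
  simp only [coeff_div_decayRate_add hl.ne' hD.ne'] at hsum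
  have hS : EqOn (survProb l D ρ₀) _ (Ioi 0) := fun t ht => survProb_eq_tsum_prod hD.le ht.le
  refine ⟨(integrableOn_tsum_mul_exp_neg_mul hc hrate hb).congr_fun hS.symm measurableSet_Ioi,
    ?_⟩
  rw [setIntegral_congr_fun measurableSet_Ioi hS, ← hsum.tsum_eq, tsum_mul_left, hg.tsum_prod]

/-- The survival probability is integrable on `(0,∞)`, and the mean reaction time
`∫₀^∞ S(t) dt` equals
`(64 ρ₀ l⁴/(D π⁶)) ∑_{n,m} 1/((2n+1)²(2m+1)²((2n+1)² + (2m+1)²))`. -/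
theorem mean_reaction_time_eq_double_series (l D ρ₀ : ℝ) (hl : 0 < l) (hD : 0 < D)
    (hρ₀ : 0 < ρ₀) :
    IntegrableOn (survProb l D ρ₀) (Set.Ioi 0) ∧
    (∫ t in Set.Ioi (0 : ℝ), survProb l D ρ₀ t)
      = 64 * ρ₀ * l ^ 4 / (D * π ^ 6) *
        ∑' n : ℕ, ∑' m : ℕ,
          1 / ((2 * (n : ℝ) + 1) ^ 2 * (2 * (m : ℝ) + 1) ^ 2 *
            ((2 * (n : ℝ) + 1) ^ 2 + (2 * (m : ℝ) + 1) ^ 2)) :=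
  mean_reaction_time_eq_double_series_general l D ρ₀ hl hD
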